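/- arXiv:2511.00168 — 2 statements merged into one kernel-verified Lean document; each statement's English description precedes it below -/
import Mathlib

section
/- Let M(s) = f0 + gᵀs + (1/2)sᵀHs + (β/6)‖s‖³ + (σ/4)‖s‖⁴ with σ ≥ 0, and suppose s* is a global minimizer of M over ℝⁿ. Then B(s*) s* = -g and B(s*) is positive semidefinite, where B(s) = H + (β/2)‖s‖ I + σ‖s‖² I. -/
/-! Along a line `s + t • d` the model is differentiable at `t = 0` even when `s = 0`, because
`‖s‖³ = (s ⬝ᵥ s) ^ (3/2)` is `C¹`; its derivative there is `(g + B(s) s) ⬝ᵥ d`, so a minimizer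
satisfies `B(s*) s* = -g`. If `‖s‖ = ‖s*‖` the regularization terms of `M s` and `M s*` coincide,
and the first-order condition turns `M s - M s*` into `½ (s - s*)ᵀ B(s*) (s - s*)`. Hence the
quadratic form of `B(s*)` is nonnegative on every chord of the sphere through `s*`; every
direction `u` with `s* ⬝ᵥ u ≠ 0` spans such a chord, and the directions orthogonal to `s*` follow
by continuity. When `s* = 0`, `B(0) = H`, and comparing `M (± t u)` with `M 0` as `t → 0⁺` gives
`uᵀ H u ≥ 0`. -/

open Matrix Polynomial

noncomputable def enormFin {n : ℕ} (s : Fin n → ℝ) : ℝ := Real.sqrt (s ⬝ᵥ s)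

noncomputable def Mfun {n : ℕ} (f0 : ℝ) (g : Fin n → ℝ)
    (H : Matrix (Fin n) (Fin n) ℝ) (β σ : ℝ) (s : Fin n → ℝ) : ℝ :=
  f0 + g ⬝ᵥ s + (1/2) * (s ⬝ᵥ (H *ᵥ s)) + (β/6) * enormFin s ^ 3 + (σ/4) * enormFin s ^ 4

noncomputable def Bmat {n : ℕ} (H : Matrix (Fin n) (Fin n) ℝ) (β σ : ℝ)
    (s : Fin n → ℝ) : Matrix (Fin n) (Fin n) ℝ :=
  H + ((β/2) * enormFin s) • (1 : Matrix (Fin n) (Fin n) ℝ)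
    + (σ * enormFin s ^ 2) • (1 : Matrix (Fin n) (Fin n) ℝ)

lemma nonneg_of_forall_pos_nonneg_quadratic {a b c : ℝ}
    (h : ∀ t : ℝ, 0 < t → 0 ≤ a + b * t + c * t ^ 2) : 0 ≤ a := by
  have hlim : Filter.Tendsto (fun t : ℝ => a + b * t + c * t ^ 2) (nhdsWithin 0 (Set.Ioi 0))
      (nhds a) := by
    have : Continuous fun t : ℝ => a + b * t + c * t ^ 2 := by fun_prop
    simpa using (this.tendsto 0).mono_left nhdsWithin_le_nhds
  exact ge_of_tendsto hlim (eventually_nhdsWithin_of_forall h)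

lemma hasDerivAt_quadratic_zero (a b c : ℝ) :
    HasDerivAt (fun t : ℝ => a + b * t + c * t ^ 2) b 0 := by
  refine ((((hasDerivAt_id (0 : ℝ)).const_mul b).const_add a).add
    (((hasDerivAt_id (0 : ℝ)).pow 2).const_mul c)).congr_deriv ?_
  simp

lemma Matrix.IsSymm.dotProduct_mulVec_comm {ι R : Type*} [Fintype ι] [CommSemiring R]
    {A : Matrix ι ι R} (hA : A.IsSymm) (v w : ι → R) :
    v ⬝ᵥ (A *ᵥ w) = w ⬝ᵥ (A *ᵥ v) := by
  rw [dotProduct_mulVec, ← vecMul_transpose, hA.eq, dotProduct_comm]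

lemma dotProduct_mulVec_nonneg_of_nonneg_on_sphere {ι : Type*} [Fintype ι]
    {A : Matrix ι ι ℝ} {s : ι → ℝ} (hs : s ≠ 0)
    (h : ∀ w, (s + w) ⬝ᵥ (s + w) = s ⬝ᵥ s → 0 ≤ w ⬝ᵥ (A *ᵥ w)) (u : ι → ℝ) :
    0 ≤ u ⬝ᵥ (A *ᵥ u) := by
  have of_dotProduct_ne_zero : ∀ u, s ⬝ᵥ u ≠ 0 → 0 ≤ u ⬝ᵥ (A *ᵥ u) := by
    intro u hu
    have huu : u ⬝ᵥ u ≠ 0 := fun h0 => hu (by simp [dotProduct_self_eq_zero.mp h0])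
    -- `s + t • u` is the second intersection of the line through `s` with the sphere
    set t := -2 * (s ⬝ᵥ u) / (u ⬝ᵥ u)
    have ht : t ≠ 0 := div_ne_zero (by simpa using hu) huu
    have hsphere : (s + t • u) ⬝ᵥ (s + t • u) = s ⬝ᵥ s := by
      simp only [add_dotProduct, dotProduct_add, smul_dotProduct, dotProduct_smul, smul_eq_mul,
        dotProduct_comm u s, t]
      field_simp
      ring
    have key := h _ hsphere
    rw [smul_dotProduct, mulVec_smul, dotProduct_smul, smul_eq_mul, smul_eq_mul, ← mul_assoc]
      at key
    exact nonneg_of_mul_nonneg_right key (mul_self_pos.mpr ht)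
  by_cases hu : s ⬝ᵥ u = 0
  · have hss : s ⬝ᵥ s ≠ 0 := fun h0 => hs (dotProduct_self_eq_zero.mp h0)
    refine nonneg_of_forall_pos_nonneg_quadratic (b := u ⬝ᵥ (A *ᵥ s) + s ⬝ᵥ (A *ᵥ u))
      (c := s ⬝ᵥ (A *ᵥ s)) fun ε hε => ?_
    have key := of_dotProduct_ne_zero (u + ε • s) (by
      simpa [dotProduct_add, hu] using And.intro hε.ne' hss)
    simp only [dotProduct_add, add_dotProduct, mulVec_add, mulVec_smul, smul_dotProduct,
      dotProduct_smul, smul_eq_mul] at key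
    linarith
  · exact of_dotProduct_ne_zero u hu

section CubicQuarticModel

variable {n : ℕ} (f0 : ℝ) (g : Fin n → ℝ) (H : Matrix (Fin n) (Fin n) ℝ) (β σ : ℝ)

lemma enormFin_sq (s : Fin n → ℝ) : enormFin s ^ 2 = s ⬝ᵥ s :=
  Real.sq_sqrt (by simpa using dotProduct_star_self_nonneg s)

lemma enormFin_pow_three (s : Fin n → ℝ) : enormFin s ^ 3 = (s ⬝ᵥ s) ^ (3 / 2 : ℝ) := by
  rw [enormFin, Real.sqrt_eq_rpow,
    ← Real.rpow_mul_natCast (by simpa using dotProduct_star_self_nonneg s)]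
  norm_num

lemma enormFin_pow_four (s : Fin n → ℝ) : enormFin s ^ 4 = (s ⬝ᵥ s) ^ 2 := by
  rw [← enormFin_sq]; ring

lemma enormFin_smul (t : ℝ) (s : Fin n → ℝ) : enormFin (t • s) = |t| * enormFin s := by
  rw [enormFin, enormFin, smul_dotProduct, dotProduct_smul, smul_eq_mul, smul_eq_mul, ← mul_assoc,
    Real.sqrt_mul (mul_self_nonneg t), Real.sqrt_mul_self_eq_abs]

lemma enormFin_zero : enormFin (0 : Fin n → ℝ) = 0 := by simp [enormFin]

lemma Bmat_mulVec (s v : Fin n → ℝ) :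
    Bmat H β σ s *ᵥ v = H *ᵥ v + ((β / 2) * enormFin s + σ * enormFin s ^ 2) • v := by
  simp only [Bmat, add_mulVec, smul_mulVec, one_mulVec, add_smul]
  abel

lemma Bmat_zero : Bmat H β σ 0 = H := by simp [Bmat, enormFin_zero]

lemma Bmat_isSymm {H} (hH : H.IsSymm) (s : Fin n → ℝ) : (Bmat H β σ s).IsSymm :=
  (hH.add (isSymm_one.smul _)).add (isSymm_one.smul _)

lemma hasDerivAt_Mfun_line {H} (hH : H.IsSymm) (s d : Fin n → ℝ) :
    HasDerivAt (fun t : ℝ => Mfun f0 g H β σ (s + t • d)) ((g + Bmat H β σ s *ᵥ s) ⬝ᵥ d) 0 := by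
  have hsq : ∀ t : ℝ,
      (s + t • d) ⬝ᵥ (s + t • d) = s ⬝ᵥ s + 2 * (s ⬝ᵥ d) * t + (d ⬝ᵥ d) * t ^ 2 := by
    intro t
    simp only [add_dotProduct, dotProduct_add, smul_dotProduct, dotProduct_smul, smul_eq_mul,
      dotProduct_comm d s]
    ring
  have hquad := hasDerivAt_quadratic_zero (f0 + g ⬝ᵥ s + (1 / 2) * (s ⬝ᵥ (H *ᵥ s)))
    (g ⬝ᵥ d + s ⬝ᵥ (H *ᵥ d)) ((1 / 2) * (d ⬝ᵥ (H *ᵥ d)))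
  have hnorm := hasDerivAt_quadratic_zero (s ⬝ᵥ s) (2 * (s ⬝ᵥ d)) (d ⬝ᵥ d)
  have hcubic := (hnorm.rpow_const (p := 3 / 2) (Or.inr (by norm_num))).const_mul (β / 6)
  have hquartic := (hnorm.pow 2).const_mul (σ / 4)
  have hfun : (fun t : ℝ => Mfun f0 g H β σ (s + t • d)) = fun t =>
      (f0 + g ⬝ᵥ s + (1 / 2) * (s ⬝ᵥ (H *ᵥ s)) + (g ⬝ᵥ d + s ⬝ᵥ (H *ᵥ d)) * t
        + (1 / 2) * (d ⬝ᵥ (H *ᵥ d)) * t ^ 2)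
      + (β / 6) * (s ⬝ᵥ s + 2 * (s ⬝ᵥ d) * t + (d ⬝ᵥ d) * t ^ 2) ^ (3 / 2 : ℝ)
      + (σ / 4) * (s ⬝ᵥ s + 2 * (s ⬝ᵥ d) * t + (d ⬝ᵥ d) * t ^ 2) ^ 2 := by
    funext t
    rw [Mfun, enormFin_pow_three, enormFin_pow_four, hsq]
    simp only [dotProduct_add, add_dotProduct, mulVec_add, mulVec_smul, smul_dotProduct,
      dotProduct_smul, smul_eq_mul, hH.dotProduct_mulVec_comm d s]
    ring
  rw [hfun]
  refine ((hquad.add hcubic).add hquartic).congr_deriv ?_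
  have hroot : (s ⬝ᵥ s) ^ (3 / 2 - 1 : ℝ) = enormFin s := by
    rw [enormFin, Real.sqrt_eq_rpow]; norm_num
  rw [Bmat_mulVec, add_dotProduct, add_dotProduct, smul_dotProduct, smul_eq_mul,
    dotProduct_comm (H *ᵥ s), hH.dotProduct_mulVec_comm d s]
  simp only [mul_zero, add_zero, zero_pow two_ne_zero]
  rw [hroot, enormFin_sq]
  ring

lemma Bmat_mulVec_self_eq_neg_of_isLocalMin {H} (hH : H.IsSymm)
    {s : Fin n → ℝ} (hs : IsLocalMin (Mfun f0 g H β σ) s) : Bmat H β σ s *ᵥ s = -g := by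
  refine eq_neg_of_add_eq_zero_right (dotProduct_eq_zero _ fun d => ?_)
  have hline : IsLocalMin (fun t : ℝ => Mfun f0 g H β σ (s + t • d)) 0 :=
    IsLocalMin.comp_continuous (f := Mfun f0 g H β σ) (g := fun t : ℝ => s + t • d) (b := 0)
      (by simpa using hs) (by fun_prop)
  exact hline.hasDerivAt_eq_zero (hasDerivAt_Mfun_line f0 g β σ hH s d)

lemma Mfun_sub_Mfun_of_enormFin_eq {H} (hH : H.IsSymm) {s s₀ : Fin n → ℝ}
    (h : enormFin s = enormFin s₀) :
    Mfun f0 g H β σ s - Mfun f0 g H β σ s₀ = (g + Bmat H β σ s₀ *ᵥ s₀) ⬝ᵥ (s - s₀)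
      + (1 / 2) * ((s - s₀) ⬝ᵥ (Bmat H β σ s₀ *ᵥ (s - s₀))) := by
  have hss : s ⬝ᵥ s = s₀ ⬝ᵥ s₀ := by rw [← enormFin_sq, ← enormFin_sq, h]
  simp only [Mfun, Bmat_mulVec, h, add_dotProduct, dotProduct_add, sub_dotProduct, dotProduct_sub,
    mulVec_sub, smul_dotProduct, dotProduct_smul, smul_eq_mul, hH.dotProduct_mulVec_comm s₀ s,
    dotProduct_comm s₀ s, dotProduct_comm (H *ᵥ s₀)]
  linear_combination (-1 / 2 * ((β / 2) * enormFin s₀ + σ * enormFin s₀ ^ 2)) * hss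

lemma Mfun_smul_add_Mfun_neg_smul (u : Fin n → ℝ) {t : ℝ} (ht : 0 ≤ t) :
    Mfun f0 g H β σ (t • u) + Mfun f0 g H β σ (-t • u) - 2 * Mfun f0 g H β σ 0
      = t ^ 2 * (u ⬝ᵥ (H *ᵥ u) + (β / 3) * enormFin u ^ 3 * t
          + (σ / 2) * enormFin u ^ 4 * t ^ 2) := by
  simp only [Mfun, enormFin_smul, abs_neg, abs_of_nonneg ht, enormFin_zero, dotProduct_smul,
    smul_dotProduct, mulVec_smul, smul_eq_mul, dotProduct_zero, mulVec_zero]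
  ring

lemma dotProduct_mulVec_nonneg_of_forall_Mfun_zero_le
    (hmin : ∀ s, Mfun f0 g H β σ 0 ≤ Mfun f0 g H β σ s) (u : Fin n → ℝ) :
    0 ≤ u ⬝ᵥ (H *ᵥ u) := by
  refine nonneg_of_forall_pos_nonneg_quadratic (b := (β / 3) * enormFin u ^ 3)
    (c := (σ / 2) * enormFin u ^ 4) fun t ht => ?_
  have hsum := Mfun_smul_add_Mfun_neg_smul f0 g H β σ u ht.le
  refine nonneg_of_mul_nonneg_right (hsum ▸ ?_) (pow_pos ht 2)
  linarith [hmin (t • u), hmin (-t • u)]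

end CubicQuarticModel

theorem stmt0_general {n : ℕ} (f0 : ℝ) (g : Fin n → ℝ) (H : Matrix (Fin n) (Fin n) ℝ)
    (hH : H.IsSymm) (β σ : ℝ) (sstar : Fin n → ℝ)
    (hmin : ∀ s : Fin n → ℝ, Mfun f0 g H β σ sstar ≤ Mfun f0 g H β σ s) :
    (Bmat H β σ sstar) *ᵥ sstar = -g ∧ (Bmat H β σ sstar).PosSemidef := by
  have hstat :=
    Bmat_mulVec_self_eq_neg_of_isLocalMin f0 g β σ hH (Filter.Eventually.of_forall hmin)
  refine ⟨hstat, .of_dotProduct_mulVec_nonneg (isHermitian_iff_isSymm.2 (Bmat_isSymm β σ hH _))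
    fun u => ?_⟩
  rw [star_trivial]
  rcases eq_or_ne sstar 0 with rfl | hs
  · rw [Bmat_zero]
    exact dotProduct_mulVec_nonneg_of_forall_Mfun_zero_le f0 g H β σ hmin u
  · refine dotProduct_mulVec_nonneg_of_nonneg_on_sphere hs (fun w hw => ?_) u
    have hdiff := Mfun_sub_Mfun_of_enormFin_eq f0 g β σ hH (s := sstar + w) (s₀ := sstar)
      (by rw [enormFin, enormFin, hw])
    rw [hstat, add_neg_cancel, zero_dotProduct, zero_add, add_sub_cancel_left] at hdiff
    linarith [hmin (sstar + w)]

theorem stmt0 {n : ℕ} (f0 : ℝ) (g : Fin n → ℝ) (H : Matrix (Fin n) (Fin n) ℝ)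
    (hH : H.IsSymm) (β σ : ℝ) (hσ : 0 ≤ σ) (sstar : Fin n → ℝ)
    (hmin : ∀ s : Fin n → ℝ, Mfun f0 g H β σ sstar ≤ Mfun f0 g H β σ s) :
    (Bmat H β σ sstar) *ᵥ sstar = -g ∧ (Bmat H β σ sstar).PosSemidef :=
  stmt0_general f0 g H hH β σ sstar hmin
end

section
/- A univariate polynomial p(z) = p₀ + p₁z + p₂z² + p₃z³ + p₄z⁴ is a sum of squares of polynomials if and only if there exists t ∈ ℝ such that the 3×3 matrix [[p₀, p₁/2, t],[p₁/2, p₂ - 2t, p₃/2],[t, p₃/2, p₄]] is positive semidefinite. -/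
/-!
The top coefficients of a sum of squares cannot cancel, so `∑ fᵢ²` has twice the largest degree
of the `fᵢ`; for a quartic every `fᵢ` is thus `vᵢ ⬝ (1, X, X²)`, and the quartic is
`(1, X, X²) G (1, X, X²)ᵀ` with `G = ∑ vᵢ vᵢᵀ` positive semidefinite. Conversely a positive
semidefinite `G` is such a sum of rank-one terms. Matching coefficients, a symmetric `G` represents
the quartic exactly when all its entries are fixed by the `pᵢ` except `t = G₀₂`, which is traded
against `G₁₁ = p₂ - 2t`.
-/

open Polynomial Matrix

namespace Polynomial

variable {R : Type*}

section OrderedRing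

variable [CommRing R] [LinearOrder R] [IsStrictOrderedRing R] {ι : Type*} [Fintype ι]

theorem two_mul_natDegree_le_natDegree_sum_sq (f : ι → R[X]) (i : ι) :
    2 * (f i).natDegree ≤ (∑ j, f j ^ 2).natDegree := by
  obtain ⟨j, -, hj⟩ := Finset.exists_max_image Finset.univ (fun j ↦ (f j).natDegree)
    ⟨i, Finset.mem_univ i⟩
  have hij : (f i).natDegree ≤ (f j).natDegree := hj i (Finset.mem_univ i)
  rcases eq_or_ne (f j) 0 with hfj | hfj
  · simp_all
  have hcoeff : (∑ k, f k ^ 2).coeff (2 * (f j).natDegree) =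
      ∑ k, (f k).coeff (f j).natDegree ^ 2 := by
    rw [finsetSum_coeff]
    exact Finset.sum_congr rfl fun k hk ↦ coeff_pow_of_natDegree_le (hj k hk)
  have hpos : 0 < (∑ k, f k ^ 2).coeff (2 * (f j).natDegree) := by
    rw [hcoeff]
    refine Finset.sum_pos' (fun k _ ↦ sq_nonneg _) ⟨j, Finset.mem_univ j, ?_⟩
    exact pow_two_pos_of_ne_zero (by rwa [coeff_natDegree, Ne, leadingCoeff_eq_zero])
  calc 2 * (f i).natDegree ≤ 2 * (f j).natDegree := by gcongr
    _ ≤ _ := le_natDegree_of_ne_zero hpos.ne'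

end OrderedRing

section Gram

variable [CommSemiring R] {n : ℕ}

/-- `gramPoly G = vᵀ G v` for the monomial vector `v = (1, X, …, X ^ (n - 1))`. -/
noncomputable def gramPoly (G : Matrix (Fin n) (Fin n) R) : R[X] :=
  ∑ i : Fin n, ∑ j : Fin n, monomial ((i : ℕ) + j) (G i j)

theorem gramPoly_sum {ι : Type*} (s : Finset ι) (G : ι → Matrix (Fin n) (Fin n) R) :
    gramPoly (∑ k ∈ s, G k) = ∑ k ∈ s, gramPoly (G k) := by
  simp only [gramPoly, Matrix.sum_apply, map_sum]
  rw [Finset.sum_comm_cycle]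

theorem gramPoly_vecMulVec [DecidableEq R] (v : Fin n → R) :
    gramPoly (vecMulVec v v) = ofFn n v ^ 2 := by
  simp only [gramPoly, vecMulVec_apply, ofFn_eq_sum_monomial, sq, Finset.sum_mul_sum,
    monomial_mul_monomial]

theorem sum_sq_ofFn_eq_gramPoly [DecidableEq R] {ι : Type*} [Fintype ι] (v : ι → Fin n → R) :
    ∑ k, ofFn n (v k) ^ 2 = gramPoly (∑ k, vecMulVec (v k) (v k)) := by
  simp only [gramPoly_sum, gramPoly_vecMulVec]

noncomputable def quartic (a₀ a₁ a₂ a₃ a₄ : R) : R[X] :=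
  C a₀ + C a₁ * X + C a₂ * X ^ 2 + C a₃ * X ^ 3 + C a₄ * X ^ 4

theorem natDegree_quartic_le (a₀ a₁ a₂ a₃ a₄ : R) : (quartic a₀ a₁ a₂ a₃ a₄).natDegree ≤ 4 := by
  unfold quartic; compute_degree

theorem quartic_inj {a₀ a₁ a₂ a₃ a₄ b₀ b₁ b₂ b₃ b₄ : R} :
    quartic a₀ a₁ a₂ a₃ a₄ = quartic b₀ b₁ b₂ b₃ b₄ ↔
      a₀ = b₀ ∧ a₁ = b₁ ∧ a₂ = b₂ ∧ a₃ = b₃ ∧ a₄ = b₄ := by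
  refine ⟨fun h ↦ ?_, by rintro ⟨rfl, rfl, rfl, rfl, rfl⟩; rfl⟩
  have hcoeff (k : ℕ) := congrArg (coeff · k) h
  exact ⟨by simpa [quartic] using hcoeff 0, by simpa [quartic] using hcoeff 1,
    by simpa [quartic] using hcoeff 2, by simpa [quartic] using hcoeff 3,
    by simpa [quartic] using hcoeff 4⟩

theorem gramPoly_fin_three (G : Matrix (Fin 3) (Fin 3) R) :
    gramPoly G =
      quartic (G 0 0) (G 0 1 + G 1 0) (G 0 2 + G 1 1 + G 2 0) (G 1 2 + G 2 1) (G 2 2) := by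
  simp only [gramPoly, quartic, Fin.sum_univ_three, ← C_mul_X_pow_eq_monomial, Fin.val_zero,
    Fin.val_one, Fin.val_two, map_add]
  ring

end Gram

section Quartic

variable [Field R] [NeZero (2 : R)]

def quarticGram (p₀ p₁ p₂ p₃ p₄ t : R) : Matrix (Fin 3) (Fin 3) R :=
  of ![![p₀, p₁ / 2, t], ![p₁ / 2, p₂ - 2 * t, p₃ / 2], ![t, p₃ / 2, p₄]]

theorem gramPoly_quarticGram (p₀ p₁ p₂ p₃ p₄ t : R) :
    gramPoly (quarticGram p₀ p₁ p₂ p₃ p₄ t) = quartic p₀ p₁ p₂ p₃ p₄ := by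
  rw [gramPoly_fin_three, quartic_inj]
  exact ⟨rfl, add_halves p₁, show t + (p₂ - 2 * t) + t = p₂ by ring, add_halves p₃, rfl⟩

theorem eq_quarticGram_of_gramPoly_eq {G : Matrix (Fin 3) (Fin 3) R} (hG : G.IsSymm)
    {p₀ p₁ p₂ p₃ p₄ : R} (h : gramPoly G = quartic p₀ p₁ p₂ p₃ p₄) :
    G = quarticGram p₀ p₁ p₂ p₃ p₄ (G 0 2) := by
  rw [gramPoly_fin_three, quartic_inj] at h
  obtain ⟨rfl, rfl, rfl, rfl, rfl⟩ := h
  ext i j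
  fin_cases i <;> fin_cases j <;>
    simp [quarticGram, hG.apply 0 1, hG.apply 0 2, hG.apply 1 2, two_mul]

end Quartic

section Real

variable {n : ℕ}

theorem exists_sum_sq_eq_gramPoly_of_posSemidef {G : Matrix (Fin n) (Fin n) ℝ}
    (hG : G.PosSemidef) : ∃ (m : ℕ) (f : Fin m → ℝ[X]), gramPoly G = ∑ i, f i ^ 2 := by
  obtain ⟨m, v, rfl⟩ := posSemidef_iff_eq_sum_vecMulVec.1 hG
  exact ⟨m, fun i ↦ ofFn n (v i), by simp only [star_trivial, sum_sq_ofFn_eq_gramPoly]⟩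

theorem exists_posSemidef_gramPoly_eq_sum_sq {k : ℕ} (f : Fin k → ℝ[X])
    (hf : ∀ i, (f i).natDegree < n) :
    ∃ G : Matrix (Fin n) (Fin n) ℝ, G.PosSemidef ∧ gramPoly G = ∑ i, f i ^ 2 := by
  refine ⟨∑ i, vecMulVec (toFn n (f i)) (toFn n (f i)),
    posSemidef_iff_eq_sum_vecMulVec.2 ⟨k, fun i ↦ toFn n (f i), by simp only [star_trivial]⟩, ?_⟩
  rw [← sum_sq_ofFn_eq_gramPoly]
  simp only [ofFn_comp_toFn_eq_id_of_natDegree_lt (hf _)]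

end Real

end Polynomial

theorem stmt17 (p0 p1 p2 p3 p4 : ℝ) :
    (∃ (k : ℕ) (f : Fin k → Polynomial ℝ),
      Polynomial.C p0 + Polynomial.C p1 * Polynomial.X
          + Polynomial.C p2 * Polynomial.X ^ 2
          + Polynomial.C p3 * Polynomial.X ^ 3
          + Polynomial.C p4 * Polynomial.X ^ 4
        = ∑ i : Fin k, (f i)^2)
    ↔ ∃ t : ℝ, (Matrix.of ![![p0, p1/2, t], ![p1/2, p2 - 2*t, p3/2],
        ![t, p3/2, p4]]).PosSemidef := by
  change (∃ (k : ℕ) (f : Fin k → ℝ[X]), quartic p0 p1 p2 p3 p4 = ∑ i, f i ^ 2) ↔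
    ∃ t, (quarticGram p0 p1 p2 p3 p4 t).PosSemidef
  constructor
  · rintro ⟨k, f, hp⟩
    have hdeg (i : Fin k) : (f i).natDegree < 3 := by
      have := (two_mul_natDegree_le_natDegree_sum_sq f i).trans
        (hp ▸ natDegree_quartic_le p0 p1 p2 p3 p4)
      omega
    obtain ⟨G, hG, hGp⟩ := exists_posSemidef_gramPoly_eq_sum_sq f hdeg
    rw [← hp] at hGp
    have hGsymm : G.IsSymm := isHermitian_iff_isSymm.1 hG.isHermitian
    exact ⟨G 0 2, eq_quarticGram_of_gramPoly_eq hGsymm hGp ▸ hG⟩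
  · rintro ⟨t, hM⟩
    obtain ⟨m, f, hf⟩ := exists_sum_sq_eq_gramPoly_of_posSemidef hM
    exact ⟨m, f, gramPoly_quarticGram p0 p1 p2 p3 p4 t ▸ hf⟩
end
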